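/- Let a, b ∈ ℝ, c > 0, ρ > 0 and |x| < 1 with x > 0. Then Bateman's fractional integral formula holds: ₂F₁(a,b; c+ρ; x) = (Γ(c+ρ)/(Γ(c)Γ(ρ))) · x^{1-c-ρ} ∫_0^x t^{c-1} (x-t)^{ρ-1} ₂F₁(a,b;c;t) dt. -/

import Mathlib

/-!
Integrate the series of `₂F₁(a,b;c;t)` term by term. By the Beta integral and
`Γ(s + k) = (s)_k Γ(s)`, the normalised integral
`Γ(c+ρ)/(Γ(c)Γ(ρ)) x^{1-c-ρ} ∫_0^x t^{c-1}(x-t)^{ρ-1} t^k dt` equals `(c)_k/(c+ρ)_k · x^k`, which turns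
the coefficients of `₂F₁(a,b;c;·)` into those of `₂F₁(a,b;c+ρ;·)`. The interchange of sum and
integral is dominated convergence: on `[0,x]` the terms are bounded by the coefficients of the
positive series `₂F₁(|a|+1,|b|+1;c;x)` times the integrable kernel, and that series converges for
`x < 1` by the ratio test.
-/

open scoped BigOperators
open intervalIntegral

/-- The Pochhammer symbol (rising factorial) `(x)_k = ∏_{r=0}^{k-1} (x+r)`. -/
noncomputable def poch (x : ℝ) (k : ℕ) : ℝ := ∏ r ∈ Finset.range k, (x + r)

/-- The Gauss hypergeometric series `₂F₁(a,b;c;z) = Σ_{k≥0} (a)_k(b)_k/((c)_k k!) z^k`. -/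
noncomputable def hyp2F1 (a b c z : ℝ) : ℝ :=
  ∑' k : ℕ, (poch a k * poch b k) / (poch c k * (k.factorial : ℝ)) * z ^ k

open MeasureTheory Filter Topology Set

lemma poch_succ (x : ℝ) (k : ℕ) : poch x (k + 1) = poch x k * (x + k) :=
  Finset.prod_range_succ _ _

lemma poch_pos {x : ℝ} (hx : 0 < x) (k : ℕ) : 0 < poch x k :=
  Finset.prod_pos fun _ _ => by positivity

lemma abs_poch_le (x : ℝ) (k : ℕ) : |poch x k| ≤ poch (|x| + 1) k := by
  rw [poch, poch, Finset.abs_prod]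
  refine Finset.prod_le_prod (fun _ _ => abs_nonneg _) fun r _ => ?_
  calc |x + r| ≤ |x| + r := by simpa using abs_add_le x r
    _ ≤ |x| + 1 + r := by linarith

lemma Gamma_add_nat_eq_poch_mul {s : ℝ} (hs : 0 < s) (k : ℕ) :
    Real.Gamma (s + k) = poch s k * Real.Gamma s := by
  induction k with
  | zero => simp [poch]
  | succ n ih =>
    rw [Nat.cast_succ, ← add_assoc, Real.Gamma_add_one (by positivity), ih, poch_succ]
    ring

section HypergeometricCoefficients

noncomputable def hypCoeff (a b c : ℝ) (k : ℕ) : ℝ :=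
  poch a k * poch b k / (poch c k * (k.factorial : ℝ))

lemma hyp2F1_eq_tsum (a b c z : ℝ) : hyp2F1 a b c z = ∑' k, hypCoeff a b c k * z ^ k := rfl

variable {a b c : ℝ}

lemma hypCoeff_pos (ha : 0 < a) (hb : 0 < b) (hc : 0 < c) (k : ℕ) : 0 < hypCoeff a b c k := by
  have := poch_pos ha k
  have := poch_pos hb k
  have := poch_pos hc k
  unfold hypCoeff
  positivity

lemma hypCoeff_succ (hc : 0 < c) (k : ℕ) :
    hypCoeff a b c (k + 1) = hypCoeff a b c k * ((a + k) / (1 + k) * ((b + k) / (c + k))) := by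
  have := (poch_pos hc k).ne'
  have : c + k ≠ 0 := by positivity
  have : (1 : ℝ) + k ≠ 0 := by positivity
  simp only [hypCoeff, poch_succ, Nat.factorial_succ]
  push_cast
  field_simp
  ring

lemma abs_hypCoeff_le (hc : 0 < c) (k : ℕ) :
    |hypCoeff a b c k| ≤ hypCoeff (|a| + 1) (|b| + 1) c k := by
  have hden : 0 < poch c k * (k.factorial : ℝ) := by have := poch_pos hc k; positivity
  rw [hypCoeff, hypCoeff, abs_div, abs_of_pos hden, abs_mul]
  gcongr
  · exact (abs_nonneg _).trans (abs_poch_le a k)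
  · exact abs_poch_le a k
  · exact abs_poch_le b k

lemma hypCoeff_mul_poch_div_poch (hc : 0 < c) (d : ℝ) (k : ℕ) :
    hypCoeff a b c k * (poch c k / poch d k) = hypCoeff a b d k := by
  have := (poch_pos hc k).ne'
  unfold hypCoeff
  field_simp

lemma summable_hypCoeff_mul_pow (ha : 0 < a) (hb : 0 < b) (hc : 0 < c) {y : ℝ} (hy0 : 0 < y)
    (hy1 : y < 1) : Summable fun k => hypCoeff a b c k * y ^ k := by
  have hpos : ∀ k, 0 < hypCoeff a b c k * y ^ k := fun k =>
    mul_pos (hypCoeff_pos ha hb hc k) (pow_pos hy0 k)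
  refine summable_of_ratio_test_tendsto_lt_one hy1 (.of_forall fun k => (hpos k).ne') ?_
  have hratio : ∀ k : ℕ, ‖hypCoeff a b c (k + 1) * y ^ (k + 1)‖ / ‖hypCoeff a b c k * y ^ k‖ =
      (a + k) / (1 + k) * ((b + k) / (c + k)) * y := by
    intro k
    have := (hypCoeff_pos ha hb hc k).ne'
    have := hy0.ne'
    rw [Real.norm_of_nonneg (hpos _).le, Real.norm_of_nonneg (hpos _).le, hypCoeff_succ hc,
      pow_succ]
    field_simp
  have hlim (u v : ℝ) : Tendsto (fun k : ℕ => (u + k) / (v + k)) atTop (𝓝 1) := by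
    simpa using tendsto_add_mul_div_add_mul_atTop_nhds u v (1 : ℝ) one_ne_zero
  simp_rw [hratio]
  simpa using ((hlim a 1).mul (hlim b c)).mul_const y

end HypergeometricCoefficients

lemma intervalIntegrable_rpow_mul_sub_rpow {p q x : ℝ} (hp : -1 < p) (hq : -1 < q) (hx : 0 < x) :
    IntervalIntegrable (fun t : ℝ => t ^ p * (x - t) ^ q) volume 0 x := by
  have left : IntervalIntegrable (fun t : ℝ => t ^ p * (x - t) ^ q) volume 0 (x / 2) := by
    refine (intervalIntegrable_rpow' hp).mul_continuousOn
      ((continuousOn_const.sub continuousOn_id).rpow_const fun t ht => Or.inl ?_)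
    rw [uIcc_of_le (by linarith)] at ht
    exact (show 0 < x - t by linarith [ht.2]).ne'
  have right : IntervalIntegrable (fun t : ℝ => t ^ p * (x - t) ^ q) volume (x / 2) x := by
    have h := (intervalIntegrable_rpow' hq (a := 0) (b := x / 2)).comp_sub_left x
    rw [sub_zero, show x - x / 2 = x / 2 by ring] at h
    have hpow : ContinuousOn (fun t : ℝ => t ^ p) (uIcc (x / 2) x) :=
      continuousOn_id.rpow_const fun t ht => Or.inl <| by
        rw [uIcc_of_le (by linarith)] at ht
        exact (show 0 < t by linarith [ht.1]).ne'
    simpa only [mul_comm] using h.symm.mul_continuousOn hpow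
  exact left.trans right

lemma integral_rpow_mul_sub_rpow {s t x : ℝ} (hs : 0 < s) (ht : 0 < t) (hx : 0 < x) :
    ∫ u in (0 : ℝ)..x, u ^ (s - 1) * (x - u) ^ (t - 1) =
      x ^ (s + t - 1) * (Real.Gamma s * Real.Gamma t / Real.Gamma (s + t)) := by
  have key := Complex.betaIntegral_scaled s t hx
  rw [Complex.betaIntegral_eq_Gamma_mul_div _ _ (by simpa using hs) (by simpa using ht)] at key
  have hcast : (∫ u in (0 : ℝ)..x, (u : ℂ) ^ ((s : ℂ) - 1) * ((x : ℂ) - u) ^ ((t : ℂ) - 1)) =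
      ((∫ u in (0 : ℝ)..x, u ^ (s - 1) * (x - u) ^ (t - 1) : ℝ) : ℂ) := by
    rw [← intervalIntegral.integral_ofReal, integral_of_le hx.le, integral_of_le hx.le]
    refine setIntegral_congr_fun measurableSet_Ioc fun u hu => ?_
    rw [Complex.ofReal_mul, Complex.ofReal_cpow hu.1.le,
      Complex.ofReal_cpow (by linarith [hu.2] : (0 : ℝ) ≤ x - u)]
    push_cast
    ring
  rw [hcast, ← Complex.ofReal_add, ← Complex.ofReal_one, ← Complex.ofReal_sub,
    ← Complex.ofReal_cpow hx.le, Complex.Gamma_ofReal, Complex.Gamma_ofReal,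
    Complex.Gamma_ofReal] at key
  exact_mod_cast key

lemma integral_mul_tsum_pow {w : ℝ → ℝ} {A : ℕ → ℝ} {x : ℝ} (hx : 0 ≤ x)
    (hw : IntervalIntegrable w volume 0 x) (hA : Summable fun k => |A k| * x ^ k) :
    ∫ t in (0 : ℝ)..x, w t * ∑' k, A k * t ^ k = ∑' k, A k * ∫ t in (0 : ℝ)..x, w t * t ^ k := by
  have hint (k : ℕ) : IntegrableOn (fun t => A k * (w t * t ^ k)) (Ioc 0 x) :=
    (hw.mul_continuousOn (continuous_pow k).continuousOn).1.const_mul (A k)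
  have hbound (k : ℕ) :
      ∫ t in Ioc 0 x, ‖A k * (w t * t ^ k)‖ ≤ |A k| * x ^ k * ∫ t in Ioc 0 x, ‖w t‖ := by
    rw [← MeasureTheory.integral_const_mul]
    refine setIntegral_mono_on (hint k).norm (hw.1.norm.const_mul _) measurableSet_Ioc
      fun t ht => ?_
    have htx : t ^ k ≤ x ^ k := pow_le_pow_left₀ ht.1.le ht.2 k
    calc ‖A k * (w t * t ^ k)‖ = |A k| * t ^ k * ‖w t‖ := by
          rw [norm_mul, norm_mul, norm_pow, Real.norm_of_nonneg ht.1.le, Real.norm_eq_abs]; ring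
      _ ≤ |A k| * x ^ k * ‖w t‖ := by gcongr
  have hsum : Summable fun k => ∫ t in Ioc 0 x, ‖A k * (w t * t ^ k)‖ :=
    (hA.mul_right _).of_nonneg_of_le (fun k => integral_nonneg fun _ => norm_nonneg _) hbound
  simp_rw [integral_of_le hx, ← MeasureTheory.integral_const_mul, ← tsum_mul_left]
  rw [integral_tsum_of_summable_integral_norm hint hsum]
  congr 1 with t
  exact tsum_congr fun k => by ring

lemma bateman_integral_pow {c ρ x : ℝ} (hc : 0 < c) (hρ : 0 < ρ) (hx : 0 < x) (k : ℕ) :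
    Real.Gamma (c + ρ) / (Real.Gamma c * Real.Gamma ρ) * x ^ (1 - c - ρ) *
        ∫ t in (0 : ℝ)..x, t ^ (c - 1) * (x - t) ^ (ρ - 1) * t ^ k =
      poch c k / poch (c + ρ) k * x ^ k := by
  have hshift : ∫ t in (0 : ℝ)..x, t ^ (c - 1) * (x - t) ^ (ρ - 1) * t ^ k =
      ∫ t in (0 : ℝ)..x, t ^ (c + k - 1) * (x - t) ^ (ρ - 1) := by
    refine integral_congr_ae (.of_forall fun t ht => ?_)
    rw [uIoc_of_le hx.le] at ht
    rw [← Real.rpow_natCast, show c + k - 1 = c - 1 + k by ring, Real.rpow_add ht.1]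
    ring
  have hpow : x ^ (1 - c - ρ) * x ^ (c + ρ + k - 1) = x ^ k := by
    rw [← Real.rpow_add hx, ← Real.rpow_natCast]
    ring_nf
  have hcρ : 0 < c + ρ := by positivity
  rw [hshift, integral_rpow_mul_sub_rpow (by positivity) hρ hx, Gamma_add_nat_eq_poch_mul hc,
    show c + k + ρ = c + ρ + k by ring, Gamma_add_nat_eq_poch_mul hcρ, ← hpow]
  have := (poch_pos hcρ k).ne'
  have := (Real.Gamma_pos_of_pos hc).ne'
  have := (Real.Gamma_pos_of_pos hρ).ne'
  have := (Real.Gamma_pos_of_pos hcρ).ne'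
  field_simp

/-- Bateman's fractional integral formula: for `a, b ∈ ℝ`, `c > 0`, `ρ > 0`
and `0 < x < 1`,
`₂F₁(a,b;c+ρ;x) = (Γ(c+ρ)/(Γ(c)Γ(ρ))) x^{1-c-ρ} ∫_0^x t^{c-1}(x-t)^{ρ-1} ₂F₁(a,b;c;t) dt`. -/
theorem bateman_fractional_integral (a b c ρ x : ℝ) (hc : 0 < c) (hρ : 0 < ρ)
    (hx0 : 0 < x) (hx1 : x < 1) :
    hyp2F1 a b (c + ρ) x =
      Real.Gamma (c + ρ) / (Real.Gamma c * Real.Gamma ρ) * x ^ (1 - c - ρ) *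
        ∫ t in (0 : ℝ)..x, t ^ (c - 1) * (x - t) ^ (ρ - 1) * hyp2F1 a b c t := by
  have hdom : Summable fun k => |hypCoeff a b c k| * x ^ k :=
    (summable_hypCoeff_mul_pow (by positivity) (by positivity) hc hx0 hx1).of_nonneg_of_le
      (fun k => by positivity)
      fun k => mul_le_mul_of_nonneg_right (abs_hypCoeff_le hc k) (by positivity)
  have hw := intervalIntegrable_rpow_mul_sub_rpow (p := c - 1) (q := ρ - 1)
    (by linarith) (by linarith) hx0
  simp_rw [hyp2F1_eq_tsum, integral_mul_tsum_pow hx0.le hw hdom, ← tsum_mul_left]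
  refine tsum_congr fun k => ?_
  rw [← hypCoeff_mul_poch_div_poch hc, mul_assoc, ← bateman_integral_pow hc hρ hx0 k]
  ring
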